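/- With notation as in the level-k setup, let C be a conjugacy class of G, x_0 ∈ C, y_0 := x_0^{−1}, let H be a head contained in L_{k,C} with shadow H_0 and T a tail contained in R_{k,C^{−1}} with shadow T_0. Then the set of r-tuples {(g_1,…,g_r) ∈ G^r : (g_1,…,g_k,x_0) ∈ H_0 and (y_0,g_{k+1},…,g_r) ∈ T_0} is a disjoint union of shadows of prenodes; that is, it is invariant under L_k × R_k × C_G(x_0) and equals a union of sets of the form N_0 = {g ∈ N : g_{k+1}⋯g_r = x_0} where N ranges over prenodes. -/

import Mathlib

/-- The braid move `Q_i` (`0`-indexed): it replaces the entries in positions `i` and `i+1`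
of a tuple `(g_0, …, g_{r-1})` by `g_{i+1}` and `g_{i+1}⁻¹ * g_i * g_{i+1}` respectively,
leaving all other entries unchanged.  (For `i + 1 ≥ r` it is the identity.) -/
def braidMove {G : Type*} [Group G] {r : ℕ} (i : ℕ) (g : Fin r → G) : Fin r → G :=
  fun m =>
    if _hm : (m : ℕ) = i then
      if h : i + 1 < r then g ⟨i + 1, h⟩ else g m
    else if hm' : (m : ℕ) = i + 1 then
      (g m)⁻¹ * g ⟨i, by have := m.isLt; omega⟩ * g m
    else g m

/-- The braid relations on `n` generators `Q_0, …, Q_{n-1}`. -/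
def braidRels (n : ℕ) : Set (FreeGroup (Fin n)) :=
  {w | (∃ i j : Fin n, (i : ℕ) + 1 = (j : ℕ) ∧
          w = FreeGroup.of i * FreeGroup.of j * FreeGroup.of i *
              (FreeGroup.of j * FreeGroup.of i * FreeGroup.of j)⁻¹) ∨
       (∃ i j : Fin n, (i : ℕ) + 2 ≤ (j : ℕ) ∧
          w = FreeGroup.of i * FreeGroup.of j * (FreeGroup.of j * FreeGroup.of i)⁻¹)}

/-- The Artin braid group on `r` strings, presented by `r - 1` generators
subject to the braid relations. -/
abbrev BraidGroup (r : ℕ) : Type := PresentedGroup (braidRels (r - 1))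

/-- Diagonal conjugation of a tuple by a group element `h`. -/
def diagConj {G : Type*} [Group G] {n : ℕ} (h : G) (g : Fin n → G) : Fin n → G :=
  fun m => h⁻¹ * g m * h

/-- The set `T^o(C_1, …, C_r)` of generating product-one tuples with `τ_i ∈ C_i`
for every `i`. -/
def nielsenTuples {G : Type*} [Group G] {r : ℕ} (C : Fin r → Set G) : Set (Fin r → G) :=
  {τ | (∀ m, τ m ∈ C m) ∧ (List.ofFn τ).prod = 1 ∧ Subgroup.closure (Set.range τ) = ⊤}
/-- Membership in the parabolic subgroup `B_P`: a braid `b` lies in `B_P` iff the underlying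
permutation `π b` preserves the class vector `C`. -/
def inBP {G : Type*} [Group G] {r : ℕ} (C : Fin r → Set G)
    (π : BraidGroup r →* Equiv.Perm (Fin r)) (b : BraidGroup r) : Prop :=
  ∀ m : Fin r, C (π b m) = C m

/-- Generators of `L_k`: the braid generators `Q_m` with `m + 1 < k` (0-indexed),
touching only the first `k` strings. -/
def LkGens (r k : ℕ) : Set (BraidGroup r) :=
  {x | ∃ m : Fin (r - 1), (m : ℕ) + 1 < k ∧ x = PresentedGroup.of m}

/-- Generators of `R_k`: the braid generators `Q_m` with `k ≤ m` (0-indexed),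
touching only the last `r - k` strings. -/
def RkGens (r k : ℕ) : Set (BraidGroup r) :=
  {x | ∃ m : Fin (r - 1), k ≤ (m : ℕ) ∧ x = PresentedGroup.of m}

/-- Membership in `L_k := ⟨Q_m : m + 1 < k⟩ ⊓ B_P`. -/
def inLk {G : Type*} [Group G] {r : ℕ} (C : Fin r → Set G)
    (π : BraidGroup r →* Equiv.Perm (Fin r)) (k : ℕ) (b : BraidGroup r) : Prop :=
  b ∈ Subgroup.closure (LkGens r k) ∧ inBP C π b

/-- Membership in `R_k := ⟨Q_m : k ≤ m⟩ ⊓ B_P`. -/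
def inRk {G : Type*} [Group G] {r : ℕ} (C : Fin r → Set G)
    (π : BraidGroup r →* Equiv.Perm (Fin r)) (k : ℕ) (b : BraidGroup r) : Prop :=
  b ∈ Subgroup.closure (RkGens r k) ∧ inBP C π b

/-- A node: an orbit of `L_k × R_k × G` on `T^o(C_1, …, C_r)`, where the braid group acts
through `φ` and `G` acts by diagonal conjugation. -/
def IsNode {G : Type*} [Group G] {r : ℕ} (C : Fin r → Set G)
    (π : BraidGroup r →* Equiv.Perm (Fin r)) (φ : BraidGroup r →* Equiv.Perm (Fin r → G))
    (k : ℕ) (N : Set (Fin r → G)) : Prop :=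
  ∃ τ₀ ∈ nielsenTuples C, N = {τ | ∃ l ρ : BraidGroup r, inLk C π k l ∧ inRk C π k ρ ∧
    ∃ h : G, τ = diagConj h (φ (l * ρ) τ₀)}

/-- The head of an `r`-tuple at level `k`: `(g_1, …, g_k, (g_1 ⋯ g_k)⁻¹)`. -/
def headOf {G : Type*} [Group G] {r k : ℕ} (hk : k ≤ r) (g : Fin r → G) : Fin (k + 1) → G :=
  fun m => if h : (m : ℕ) < k then g ⟨(m : ℕ), lt_of_lt_of_le h hk⟩
    else (((List.ofFn g).take k).prod)⁻¹

/-- The tail of an `r`-tuple at level `k`: `(g_1 ⋯ g_k, g_{k+1}, …, g_r)`. -/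
def tailOf {G : Type*} [Group G] {r k : ℕ} (hk : k ≤ r) (g : Fin r → G) :
    Fin (r - k + 1) → G :=
  fun m => if _h : (m : ℕ) = 0 then ((List.ofFn g).take k).prod
    else g ⟨k + (m : ℕ) - 1, by have := m.isLt; omega⟩
/-- The set `L_{k,C}` of head tuples `(g_1, …, g_k, x)` with `g_i ∈ C_i`, `x ∈ C` and
`g_1 ⋯ g_k x = 1`. -/
def LkC {G : Type*} [Group G] {r : ℕ} (C' : Fin r → Set G) {k : ℕ} (hk : k ≤ r)
    (C : Set G) : Set (Fin (k + 1) → G) :=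
  {t | (∀ m : Fin (k + 1), ∀ h : (m : ℕ) < k, t m ∈ C' ⟨(m : ℕ), lt_of_lt_of_le h hk⟩) ∧
       t ⟨k, Nat.lt_succ_self k⟩ ∈ C ∧ (List.ofFn t).prod = 1}

/-- The set `R_{k,D}` of tail tuples `(y, g_{k+1}, …, g_r)` with `y ∈ D`, `g_i ∈ C_i` and
`y g_{k+1} ⋯ g_r = 1`. -/
def RkD {G : Type*} [Group G] {r : ℕ} (C' : Fin r → Set G) {k : ℕ} (hk : k ≤ r)
    (D : Set G) : Set (Fin (r - k + 1) → G) :=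
  {t | t ⟨0, by omega⟩ ∈ D ∧
       (∀ m : Fin (r - k + 1), ∀ h : 0 < (m : ℕ),
         t m ∈ C' ⟨k + (m : ℕ) - 1, by have := m.isLt; omega⟩) ∧
       (List.ofFn t).prod = 1}

/-- A head: an orbit of `L_k × G` on `L_{k,C}`, the braid part acting through `ψL` and `G`
acting by diagonal conjugation. -/
def IsHead {G : Type*} [Group G] {r : ℕ} (C' : Fin r → Set G)
    (π : BraidGroup r →* Equiv.Perm (Fin r)) {k : ℕ} (hk : k ≤ r) (C : Set G)
    (ψL : ↥(Subgroup.closure (LkGens r k)) →* Equiv.Perm (Fin (k + 1) → G))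
    (H : Set (Fin (k + 1) → G)) : Prop :=
  ∃ t₀ ∈ LkC C' hk C,
    H = {t | ∃ (l : BraidGroup r) (hl : l ∈ Subgroup.closure (LkGens r k)),
      inBP C' π l ∧ ∃ h : G, t = diagConj h (ψL ⟨l, hl⟩ t₀)}

/-- A tail: an orbit of `R_k × G` on `R_{k,D}`, the braid part acting through `ψR` and `G`
acting by diagonal conjugation. -/
def IsTail {G : Type*} [Group G] {r : ℕ} (C' : Fin r → Set G)
    (π : BraidGroup r →* Equiv.Perm (Fin r)) {k : ℕ} (hk : k ≤ r) (D : Set G)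
    (ψR : ↥(Subgroup.closure (RkGens r k)) →* Equiv.Perm (Fin (r - k + 1) → G))
    (T : Set (Fin (r - k + 1) → G)) : Prop :=
  ∃ t₀ ∈ RkD C' hk D,
    T = {t | ∃ (ρ : BraidGroup r) (hρ : ρ ∈ Subgroup.closure (RkGens r k)),
      inBP C' π ρ ∧ ∃ h : G, t = diagConj h (ψR ⟨ρ, hρ⟩ t₀)}
/-- The head tuple `(g_1, …, g_k, x)` of an `r`-tuple, with prescribed last coordinate. -/
def headWith {G : Type*} [Group G] {r k : ℕ} (hk : k ≤ r) (g : Fin r → G) (x : G) :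
    Fin (k + 1) → G :=
  fun m => if h : (m : ℕ) < k then g ⟨(m : ℕ), lt_of_lt_of_le h hk⟩ else x

/-- The tail tuple `(y, g_{k+1}, …, g_r)` of an `r`-tuple, with prescribed first
coordinate. -/
def tailWith {G : Type*} [Group G] {r k : ℕ} (hk : k ≤ r) (g : Fin r → G) (y : G) :
    Fin (r - k + 1) → G :=
  fun m => if h : 0 < (m : ℕ) then g ⟨k + (m : ℕ) - 1, by have := m.isLt; omega⟩ else y

/-- A prenode: an orbit of `L_k × R_k × G` on the set of product-one tuples in
`C_1 × ⋯ × C_r` (no generation condition). -/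
def IsPrenode {G : Type*} [Group G] {r : ℕ} (C' : Fin r → Set G)
    (π : BraidGroup r →* Equiv.Perm (Fin r)) (φ : BraidGroup r →* Equiv.Perm (Fin r → G))
    (k : ℕ) (N : Set (Fin r → G)) : Prop :=
  ∃ τ₀ : Fin r → G, (∀ m, τ₀ m ∈ C' m) ∧ (List.ofFn τ₀).prod = 1 ∧
    N = {τ | ∃ l ρ : BraidGroup r, inLk C' π k l ∧ inRk C' π k ρ ∧
      ∃ h : G, τ = diagConj h (φ (l * ρ) τ₀)}
theorem Equiv.Perm.inv_apply_self {α : Type*} (f : Equiv.Perm α) (x : α) : f⁻¹ (f x) = x :=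
  Equiv.symm_apply_apply f x

theorem Equiv.Perm.apply_inv_self {α : Type*} (f : Equiv.Perm α) (x : α) : f (f⁻¹ x) = x :=
  Equiv.apply_symm_apply f x

section ShadowHelpers

variable {G : Type*} [Group G]

lemma diagConj_one' {n : ℕ} (g : Fin n → G) : diagConj (1 : G) g = g := by
  funext m; simp [diagConj]

lemma diagConj_diagConj {n : ℕ} (c h : G) (g : Fin n → G) :
    diagConj c (diagConj h g) = diagConj (h * c) g := by
  funext m; simp [diagConj, mul_assoc]

lemma prod_ofFn_diagConj {n : ℕ} (h : G) (g : Fin n → G) :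
    (List.ofFn (diagConj h g)).prod = h⁻¹ * (List.ofFn g).prod * h := by
  induction n with
  | zero => simp [diagConj]
  | succ n ih =>
    rw [List.ofFn_succ, List.ofFn_succ, List.prod_cons, List.prod_cons]
    have : (fun i : Fin n => diagConj h g i.succ) = diagConj h (fun i : Fin n => g i.succ) := rfl
    rw [this, ih]
    simp [diagConj, mul_assoc]

lemma braidMove_apply_of_ne {n : ℕ} (i : ℕ) (g : Fin n → G) (m : Fin n)
    (h1 : (m : ℕ) ≠ i) (h2 : (m : ℕ) ≠ i + 1) : braidMove i g m = g m := by
  simp [braidMove, h1, h2]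

lemma braidMove_eq_self {n : ℕ} (i : ℕ) (h : ¬ i + 1 < n) (g : Fin n → G) :
    braidMove i g = g := by
  funext m
  have hm := m.isLt
  by_cases h1 : (m : ℕ) = i
  · simp [braidMove, h1, h]
  · have h2 : (m : ℕ) ≠ i + 1 := by omega
    simp [braidMove, h1, h2]

lemma braidMove_succ_comp {n : ℕ} (i : ℕ) (g : Fin (n + 1) → G) :
    (braidMove (i + 1) g) ∘ Fin.succ = braidMove i (g ∘ Fin.succ) := by
  funext m
  have hm := m.isLt
  simp only [Function.comp_apply, braidMove, Fin.val_succ]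
  by_cases h1 : (m : ℕ) = i
  · rw [dif_pos (show (m : ℕ) + 1 = i + 1 by omega), dif_pos h1]
    by_cases h2 : i + 1 < n
    · rw [dif_pos (show i + 1 + 1 < n + 1 by omega), dif_pos h2, Fin.succ_mk]
    · rw [dif_neg (show ¬ i + 1 + 1 < n + 1 by omega), dif_neg h2]
  · by_cases h2 : (m : ℕ) = i + 1
    · rw [dif_neg (show ¬ (m : ℕ) + 1 = i + 1 by omega),
        dif_pos (show (m : ℕ) + 1 = i + 1 + 1 by omega),
        dif_neg h1, dif_pos h2]
      rfl
    · rw [dif_neg (show ¬ (m : ℕ) + 1 = i + 1 by omega),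
        dif_neg (show ¬ (m : ℕ) + 1 = i + 1 + 1 by omega),
        dif_neg h1, dif_neg h2]

lemma prod_ofFn_braidMove {n : ℕ} (i : ℕ) (g : Fin n → G) :
    (List.ofFn (braidMove i g)).prod = (List.ofFn g).prod := by
  induction i generalizing n g with
  | zero =>
    match n, g with
    | 0, g => simp
    | 1, g => rw [braidMove_eq_self 0 (by omega)]
    | (n + 2), g =>
      rw [List.ofFn_succ, List.ofFn_succ (f := fun i => braidMove 0 g i.succ),
        List.ofFn_succ, List.ofFn_succ (f := fun i => g i.succ)]
      have e0 : braidMove 0 g 0 = g ((0 : Fin (n + 1)).succ) := by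
        simp [braidMove]
      have e1 : braidMove 0 g ((0 : Fin (n + 1)).succ)
          = (g ((0 : Fin (n + 1)).succ))⁻¹ * g 0 * g ((0 : Fin (n + 1)).succ) := by
        simp [braidMove]
      have e2 : (fun i : Fin n => braidMove 0 g i.succ.succ) = fun i : Fin n => g i.succ.succ := by
        funext m
        exact braidMove_apply_of_ne 0 g _ (by simp) (by simp [Fin.ext_iff])
      rw [e0, e1, e2]
      simp [mul_assoc]
  | succ j ih =>
    match n, g with
    | 0, g => simp
    | (n + 1), g =>
      rw [List.ofFn_succ, List.ofFn_succ (f := g)]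
      have h0 : braidMove (j + 1) g 0 = g 0 :=
        braidMove_apply_of_ne _ g 0 (by simp) (by simp)
      have ht : (fun i : Fin n => braidMove (j + 1) g i.succ)
          = braidMove j (fun i : Fin n => g i.succ) := by
        funext m
        exact congrFun (braidMove_succ_comp j g) m
      rw [h0, ht, List.prod_cons, List.prod_cons, ih]

end ShadowHelpers
section ShadowHelpers2

variable {G : Type*} [Group G]

lemma ofFn_split {α : Type*} {n k : ℕ} (hk : k ≤ n) (g : Fin n → α) :
    List.ofFn g = (List.ofFn fun j : Fin k => g ⟨j, lt_of_lt_of_le j.isLt hk⟩)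
      ++ List.ofFn fun j : Fin (n - k) => g ⟨k + j, by have := j.isLt; omega⟩ := by
  apply List.ext_getElem
  · simp; omega
  · intro i h1 h2
    simp only [List.getElem_ofFn, List.getElem_append, List.length_ofFn]
    split
    · rfl
    · exact congrArg g (Fin.ext (by simp; omega))

lemma take_ofFn_eq {α : Type*} {n k : ℕ} (hk : k ≤ n) (g : Fin n → α) :
    (List.ofFn g).take k = List.ofFn fun j : Fin k => g ⟨j, lt_of_lt_of_le j.isLt hk⟩ := by
  rw [ofFn_split hk g, List.take_left' (by simp)]

lemma drop_ofFn_eq {α : Type*} {n k : ℕ} (hk : k ≤ n) (g : Fin n → α) :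
    (List.ofFn g).drop k = List.ofFn fun j : Fin (n - k) => g ⟨k + j, by have := j.isLt; omega⟩ := by
  rw [ofFn_split hk g, List.drop_left' (by simp)]

lemma prod_ofFn_headWith {r k : ℕ} (hk : k ≤ r) (g : Fin r → G) (x : G) :
    (List.ofFn (headWith hk g x)).prod
      = (List.ofFn fun j : Fin k => g ⟨j, lt_of_lt_of_le j.isLt hk⟩).prod * x := by
  rw [ofFn_split (Nat.le_succ k) (headWith hk g x), List.prod_append]
  congr 1
  · refine congrArg List.prod (congrArg List.ofFn (funext fun j => ?_))
    have hj := j.isLt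
    simp [headWith, hj]
  · have h2 : (List.ofFn fun j : Fin (k + 1 - k) =>
        headWith hk g x ⟨k + j, by have := j.isLt; omega⟩) = List.replicate (k + 1 - k) x := by
      apply List.eq_replicate_iff.mpr
      constructor
      · simp
      · intro b hb
        simp only [List.mem_ofFn] at hb
        obtain ⟨j, rfl⟩ := hb
        have hj := j.isLt
        simp [headWith, show ¬ (k + (j : ℕ) < k) by omega]
    rw [h2, List.prod_replicate, show k + 1 - k = 1 by omega, pow_one]

lemma prod_ofFn_tailWith {r k : ℕ} (hk : k ≤ r) (g : Fin r → G) (y : G) :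
    (List.ofFn (tailWith hk g y)).prod
      = y * (List.ofFn fun j : Fin (r - k) => g ⟨k + j, by have := j.isLt; omega⟩).prod := by
  rw [ofFn_split (show 1 ≤ r - k + 1 by omega) (tailWith hk g y), List.prod_append]
  congr 1
  · have h2 : (List.ofFn fun j : Fin 1 =>
        tailWith hk g y ⟨j, lt_of_lt_of_le j.isLt (by omega)⟩) = List.replicate 1 y := by
      apply List.eq_replicate_iff.mpr
      refine ⟨by simp, ?_⟩
      intro b hb
      simp only [List.mem_ofFn] at hb
      obtain ⟨j, rfl⟩ := hb
      have hj : (j : ℕ) = 0 := by omega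
      simp [tailWith, hj]
    rw [h2, List.prod_replicate, pow_one]
  · refine congrArg List.prod (congrArg List.ofFn (funext fun j => ?_))
    have hj := j.isLt
    have h1 : (0:ℕ) < 1 + (j : ℕ) := by omega
    simp only [tailWith, dif_pos h1]
    exact congrArg g (Fin.ext (by simp; omega))

lemma headWith_congr {r k : ℕ} (hk : k ≤ r) {g g' : Fin r → G} (x : G)
    (h : ∀ j : Fin r, (j : ℕ) < k → g j = g' j) :
    headWith hk g x = headWith hk g' x := by
  funext p
  by_cases hp : (p : ℕ) < k
  · simp only [headWith, dif_pos hp]; exact h _ hp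
  · simp [headWith, hp]

lemma tailWith_congr {r k : ℕ} (hk : k ≤ r) {g g' : Fin r → G} (y : G)
    (h : ∀ j : Fin r, k ≤ (j : ℕ) → g j = g' j) :
    tailWith hk g y = tailWith hk g' y := by
  funext p
  have hp' := p.isLt
  by_cases hp : (0:ℕ) < (p : ℕ)
  · simp only [tailWith, dif_pos hp]; exact h _ (show k ≤ k + (p:ℕ) - 1 by omega)
  · simp [tailWith, hp]

lemma headWith_diagConj {r k : ℕ} (hk : k ≤ r) (c x : G) (hcx : c⁻¹ * x * c = x)
    (g : Fin r → G) :
    headWith hk (diagConj c g) x = diagConj c (headWith hk g x) := by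
  funext p
  by_cases hp : (p : ℕ) < k <;> simp [headWith, diagConj, hp, hcx]

lemma tailWith_diagConj {r k : ℕ} (hk : k ≤ r) (c y : G) (hcy : c⁻¹ * y * c = y)
    (g : Fin r → G) :
    tailWith hk (diagConj c g) y = diagConj c (tailWith hk g y) := by
  funext p
  by_cases hp : (0:ℕ) < (p : ℕ) <;> simp [tailWith, diagConj, hp, hcy]

lemma braidMove_diagConj {n : ℕ} (i : ℕ) (h : G) (g : Fin n → G) :
    braidMove i (diagConj h g) = diagConj h (braidMove i g) := by
  funext m
  have hm := m.isLt
  by_cases h1 : (m : ℕ) = i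
  · by_cases h2 : i + 1 < n <;> simp [braidMove, diagConj, h1, h2]
  · by_cases h2 : (m : ℕ) = i + 1
    · simp only [braidMove, diagConj, dif_neg h1, dif_pos h2]
      group
    · simp [braidMove, diagConj, h1, h2]

end ShadowHelpers2
section ShadowHelpers3

variable {G : Type*} [Group G]

lemma headWith_braidMove {r k : ℕ} (hk : k ≤ r) (m : ℕ) (hm : m + 1 < k)
    (g : Fin r → G) (x : G) :
    headWith hk (braidMove m g) x = braidMove m (headWith hk g x) := by
  funext p
  have hp := p.isLt
  by_cases h1 : (p : ℕ) = m
  · simp [headWith, braidMove, h1, show m < k by omega, show m + 1 < r by omega,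
      show m + 1 < k + 1 by omega, show m + 1 < k by omega]
  · by_cases h2 : (p : ℕ) = m + 1
    · simp [headWith, braidMove, h1, h2, show m + 1 < k by omega, show m < k by omega,
        show ¬ (m + 1 = m) by omega]
    · by_cases h3 : (p : ℕ) < k <;>
        simp [headWith, braidMove, h1, h2, h3]

lemma tailWith_braidMove {r k : ℕ} (hk : k ≤ r) (m : ℕ) (hm1 : k ≤ m) (hm2 : m + 1 < r)
    (g : Fin r → G) (y : G) :
    tailWith hk (braidMove m g) y = braidMove (m - k + 1) (tailWith hk g y) := by
  funext p
  have hp := p.isLt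
  by_cases hp0 : (p : ℕ) = 0
  · simp [tailWith, braidMove, hp0, show ¬ ((0:ℕ) = m - k + 1) by omega,
      show ¬ ((0:ℕ) = m - k + 1 + 1) by omega]
  · by_cases h1 : (p : ℕ) = m - k + 1
    · simp [tailWith, braidMove, h1, show (0:ℕ) < m - k + 1 by omega,
        show k + (m - k + 1) - 1 = m by omega, hm2,
        show m - k + 1 + 1 < r - k + 1 by omega,
        show (0:ℕ) < m - k + 1 + 1 by omega,
        show k + (m - k + 1 + 1) - 1 = m + 1 by omega]
    · by_cases h2 : (p : ℕ) = m - k + 1 + 1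
      · simp [tailWith, braidMove, h2, show (0:ℕ) < m - k + 1 + 1 by omega,
          show k + (m - k + 1 + 1) - 1 = m + 1 by omega,
          show ¬ (m + 1 = m) by omega, show ¬ (m - k + 1 + 1 = m - k + 1) by omega,
          show (0:ℕ) < m - k + 1 by omega,
          show k + (m - k + 1) - 1 = m by omega]
      · have h3 : k + (p : ℕ) - 1 ≠ m := by omega
        have h4 : k + (p : ℕ) - 1 ≠ m + 1 := by omega
        simp [tailWith, braidMove, h1, h2, h3, h4, show (0:ℕ) < (p:ℕ) by omega]

lemma braidMove_restrict {r k : ℕ} (m : ℕ) (hm : k ≤ m) (g : Fin r → G) :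
    (fun j : Fin (r - k) => braidMove m g ⟨k + j, by have := j.isLt; omega⟩)
      = braidMove (m - k) (fun j : Fin (r - k) => g ⟨k + j, by have := j.isLt; omega⟩) := by
  funext j
  have hj := j.isLt
  by_cases h1 : (j : ℕ) = m - k
  · by_cases h2 : m + 1 < r
    · simp [braidMove, h1, h2, show k + (m - k) = m by omega,
        show m - k + 1 < r - k by omega, show k + (m - k + 1) = m + 1 by omega]
    · simp [braidMove, h1, h2, show k + (m - k) = m by omega,
        show ¬ (m - k + 1 < r - k) by omega]
  · by_cases h2 : (j : ℕ) = m - k + 1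
    · simp [braidMove, h1, h2, show k + (m - k + 1) - 1 = m by omega,
        show k + (m - k + 1) = m + 1 by omega, show ¬ (m + 1 = m) by omega,
        show k + (m - k) = m by omega]
    · have h3 : k + (j : ℕ) ≠ m := by omega
      have h4 : k + (j : ℕ) ≠ m + 1 := by omega
      simp [braidMove, h1, h2, h3, h4]

end ShadowHelpers3
section ShadowHelpers4

variable {G : Type*} [Group G] {r : ℕ}

lemma phi_fix_lt_of_RkGens (φ : BraidGroup r →* Equiv.Perm (Fin r → G))
    (hφ : ∀ (m : Fin (r - 1)) (g : Fin r → G), φ (PresentedGroup.of m) g = braidMove (m : ℕ) g)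
    (k : ℕ) {ρ : BraidGroup r} (hρ : ρ ∈ Subgroup.closure (RkGens r k)) :
    ∀ (g : Fin r → G) (j : Fin r), (j : ℕ) < k → φ ρ g j = g j := by
  refine Subgroup.closure_induction ?_ ?_ ?_ ?_ hρ
  · rintro b ⟨m, hm, rfl⟩ g j hj
    rw [hφ]
    exact braidMove_apply_of_ne _ _ _ (by omega) (by omega)
  · intro g j hj; simp
  · intro a b ha hb iha ihb g j hj
    rw [map_mul, Equiv.Perm.mul_apply, iha _ _ hj, ihb _ _ hj]
  · intro a ha ih g j hj
    have h2 : φ a (φ a⁻¹ g) = g := by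
      rw [← Equiv.Perm.mul_apply, ← map_mul, mul_inv_cancel, map_one, Equiv.Perm.one_apply]
    have h3 := ih (φ a⁻¹ g) j hj
    rw [h2] at h3
    exact h3.symm

lemma phi_fix_ge_of_LkGens (φ : BraidGroup r →* Equiv.Perm (Fin r → G))
    (hφ : ∀ (m : Fin (r - 1)) (g : Fin r → G), φ (PresentedGroup.of m) g = braidMove (m : ℕ) g)
    (k : ℕ) {l : BraidGroup r} (hl : l ∈ Subgroup.closure (LkGens r k)) :
    ∀ (g : Fin r → G) (j : Fin r), k ≤ (j : ℕ) → φ l g j = g j := by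
  refine Subgroup.closure_induction ?_ ?_ ?_ ?_ hl
  · rintro b ⟨m, hm, rfl⟩ g j hj
    rw [hφ]
    exact braidMove_apply_of_ne _ _ _ (by omega) (by omega)
  · intro g j hj; simp
  · intro a b ha hb iha ihb g j hj
    rw [map_mul, Equiv.Perm.mul_apply, iha _ _ hj, ihb _ _ hj]
  · intro a ha ih g j hj
    have h2 : φ a (φ a⁻¹ g) = g := by
      rw [← Equiv.Perm.mul_apply, ← map_mul, mul_inv_cancel, map_one, Equiv.Perm.one_apply]
    have h3 := ih (φ a⁻¹ g) j hj
    rw [h2] at h3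
    exact h3.symm

lemma pi_fix_ge_of_LkGens (π : BraidGroup r →* Equiv.Perm (Fin r))
    (hπ : ∀ m : Fin (r - 1),
      π (PresentedGroup.of m) =
        Equiv.swap ⟨(m : ℕ), by have := m.isLt; omega⟩
          ⟨(m : ℕ) + 1, by have := m.isLt; omega⟩)
    (k : ℕ) {l : BraidGroup r} (hl : l ∈ Subgroup.closure (LkGens r k)) :
    ∀ j : Fin r, k ≤ (j : ℕ) → π l j = j := by
  refine Subgroup.closure_induction ?_ ?_ ?_ ?_ hl
  · rintro b ⟨m, hm, rfl⟩ j hj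
    rw [hπ]
    exact Equiv.swap_apply_of_ne_of_ne
      (Fin.ne_of_val_ne (show (j:ℕ) ≠ (m:ℕ) by omega))
      (Fin.ne_of_val_ne (show (j:ℕ) ≠ (m:ℕ) + 1 by omega))
  · intro j hj; simp
  · intro a b ha hb iha ihb j hj
    rw [map_mul, Equiv.Perm.mul_apply, ihb _ hj, iha _ hj]
  · intro a ha ih j hj
    rw [map_inv]
    calc (π a)⁻¹ j = (π a)⁻¹ (π a j) := by rw [ih j hj]
    _ = j := Equiv.Perm.inv_apply_self _ _

lemma pi_fix_lt_of_RkGens (π : BraidGroup r →* Equiv.Perm (Fin r))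
    (hπ : ∀ m : Fin (r - 1),
      π (PresentedGroup.of m) =
        Equiv.swap ⟨(m : ℕ), by have := m.isLt; omega⟩
          ⟨(m : ℕ) + 1, by have := m.isLt; omega⟩)
    (k : ℕ) {ρ : BraidGroup r} (hρ : ρ ∈ Subgroup.closure (RkGens r k)) :
    ∀ j : Fin r, (j : ℕ) < k → π ρ j = j := by
  refine Subgroup.closure_induction ?_ ?_ ?_ ?_ hρ
  · rintro b ⟨m, hm, rfl⟩ j hj
    rw [hπ]
    exact Equiv.swap_apply_of_ne_of_ne
      (Fin.ne_of_val_ne (show (j:ℕ) ≠ (m:ℕ) by omega))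
      (Fin.ne_of_val_ne (show (j:ℕ) ≠ (m:ℕ) + 1 by omega))
  · intro j hj; simp
  · intro a b ha hb iha ihb j hj
    rw [map_mul, Equiv.Perm.mul_apply, ihb _ hj, iha _ hj]
  · intro a ha ih j hj
    rw [map_inv]
    calc (π a)⁻¹ j = (π a)⁻¹ (π a j) := by rw [ih j hj]
    _ = j := Equiv.Perm.inv_apply_self _ _

lemma pi_lt_of_LkGens (π : BraidGroup r →* Equiv.Perm (Fin r))
    (hπ : ∀ m : Fin (r - 1),
      π (PresentedGroup.of m) =
        Equiv.swap ⟨(m : ℕ), by have := m.isLt; omega⟩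
          ⟨(m : ℕ) + 1, by have := m.isLt; omega⟩)
    (k : ℕ) {l : BraidGroup r} (hl : l ∈ Subgroup.closure (LkGens r k))
    (j : Fin r) (hj : (j : ℕ) < k) : ((π l j : Fin r) : ℕ) < k := by
  by_contra hge
  push_neg at hge
  have h1 : π l (π l j) = π l j := pi_fix_ge_of_LkGens π hπ k hl _ hge
  have h2 := (π l).injective h1
  rw [h2] at hge
  omega

lemma pi_ge_of_RkGens (π : BraidGroup r →* Equiv.Perm (Fin r))
    (hπ : ∀ m : Fin (r - 1),
      π (PresentedGroup.of m) =
        Equiv.swap ⟨(m : ℕ), by have := m.isLt; omega⟩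
          ⟨(m : ℕ) + 1, by have := m.isLt; omega⟩)
    (k : ℕ) {ρ : BraidGroup r} (hρ : ρ ∈ Subgroup.closure (RkGens r k))
    (j : Fin r) (hj : k ≤ (j : ℕ)) : k ≤ ((π ρ j : Fin r) : ℕ) := by
  by_contra hge
  push_neg at hge
  have h1 : π ρ (π ρ j) = π ρ j := pi_fix_lt_of_RkGens π hπ k hρ _ hge
  have h2 := (π ρ).injective h1
  rw [h2] at hge
  omega

end ShadowHelpers4
section ShadowHelpers5

variable {G : Type*} [Group G] {r : ℕ}

lemma head_compat (φ : BraidGroup r →* Equiv.Perm (Fin r → G))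
    (hφ : ∀ (m : Fin (r - 1)) (g : Fin r → G), φ (PresentedGroup.of m) g = braidMove (m : ℕ) g)
    {k : ℕ} (hk2 : k < r)
    (ψL : ↥(Subgroup.closure (LkGens r k)) →* Equiv.Perm (Fin (k + 1) → G))
    (hψL : ∀ (m : Fin (r - 1)) (hm : (m : ℕ) + 1 < k) (g : Fin (k + 1) → G),
      ψL ⟨PresentedGroup.of m, Subgroup.subset_closure ⟨m, hm, rfl⟩⟩ g = braidMove (m : ℕ) g)
    {l : BraidGroup r} (hl : l ∈ Subgroup.closure (LkGens r k)) :
    ∀ (g : Fin r → G) (x : G),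
      headWith hk2.le (φ l g) x = ψL ⟨l, hl⟩ (headWith hk2.le g x) := by
  refine Subgroup.closure_induction (p := fun l hl => ∀ (g : Fin r → G) (x : G),
      headWith hk2.le (φ l g) x = ψL ⟨l, hl⟩ (headWith hk2.le g x)) ?_ ?_ ?_ ?_ hl
  · rintro b ⟨m, hm, rfl⟩ g x
    rw [hφ]
    exact (headWith_braidMove hk2.le m hm g x).trans ((hψL m hm _).symm)
  · intro g x
    show headWith hk2.le (φ 1 g) x = ψL 1 (headWith hk2.le g x)
    simp
  · intro a b ha hb iha ihb g x
    show headWith hk2.le (φ (a * b) g) x = ψL (⟨a, ha⟩ * ⟨b, hb⟩) (headWith hk2.le g x)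
    rw [map_mul, map_mul, Equiv.Perm.mul_apply, Equiv.Perm.mul_apply, iha, ihb]
  · intro a ha ih g x
    have h2 : φ a (φ a⁻¹ g) = g := by
      rw [← Equiv.Perm.mul_apply, ← map_mul, mul_inv_cancel, map_one, Equiv.Perm.one_apply]
    have h1 := ih (φ a⁻¹ g) x
    rw [h2] at h1
    show headWith hk2.le (φ a⁻¹ g) x = ψL (⟨a, ha⟩⁻¹) (headWith hk2.le g x)
    rw [h1, show ψL (⟨a, ha⟩⁻¹) = (ψL ⟨a, ha⟩)⁻¹ from map_inv _ _, Equiv.Perm.inv_apply_self]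

lemma tail_compat (φ : BraidGroup r →* Equiv.Perm (Fin r → G))
    (hφ : ∀ (m : Fin (r - 1)) (g : Fin r → G), φ (PresentedGroup.of m) g = braidMove (m : ℕ) g)
    {k : ℕ} (hk2 : k < r)
    (ψR : ↥(Subgroup.closure (RkGens r k)) →* Equiv.Perm (Fin (r - k + 1) → G))
    (hψR : ∀ (m : Fin (r - 1)) (hm : k ≤ (m : ℕ)) (g : Fin (r - k + 1) → G),
      ψR ⟨PresentedGroup.of m, Subgroup.subset_closure ⟨m, hm, rfl⟩⟩ g =
        braidMove ((m : ℕ) - k + 1) g)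
    {ρ : BraidGroup r} (hρ : ρ ∈ Subgroup.closure (RkGens r k)) :
    ∀ (g : Fin r → G) (y : G),
      tailWith hk2.le (φ ρ g) y = ψR ⟨ρ, hρ⟩ (tailWith hk2.le g y) := by
  refine Subgroup.closure_induction (p := fun ρ hρ => ∀ (g : Fin r → G) (y : G),
      tailWith hk2.le (φ ρ g) y = ψR ⟨ρ, hρ⟩ (tailWith hk2.le g y)) ?_ ?_ ?_ ?_ hρ
  · rintro b ⟨m, hm, rfl⟩ g y
    rw [hφ]
    have hm2 : (m : ℕ) + 1 < r := by have := m.isLt; omega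
    exact (tailWith_braidMove hk2.le m hm hm2 g y).trans ((hψR m hm _).symm)
  · intro g y
    show tailWith hk2.le (φ 1 g) y = ψR 1 (tailWith hk2.le g y)
    simp
  · intro a b ha hb iha ihb g y
    show tailWith hk2.le (φ (a * b) g) y = ψR (⟨a, ha⟩ * ⟨b, hb⟩) (tailWith hk2.le g y)
    rw [map_mul, map_mul, Equiv.Perm.mul_apply, Equiv.Perm.mul_apply, iha, ihb]
  · intro a ha ih g y
    have h2 : φ a (φ a⁻¹ g) = g := by
      rw [← Equiv.Perm.mul_apply, ← map_mul, mul_inv_cancel, map_one, Equiv.Perm.one_apply]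
    have h1 := ih (φ a⁻¹ g) y
    rw [h2] at h1
    show tailWith hk2.le (φ a⁻¹ g) y = ψR (⟨a, ha⟩⁻¹) (tailWith hk2.le g y)
    rw [h1, show ψR (⟨a, ha⟩⁻¹) = (ψR ⟨a, ha⟩)⁻¹ from map_inv _ _, Equiv.Perm.inv_apply_self]

lemma psiL_diagConj {k : ℕ}
    (ψL : ↥(Subgroup.closure (LkGens r k)) →* Equiv.Perm (Fin (k + 1) → G))
    (hψL : ∀ (m : Fin (r - 1)) (hm : (m : ℕ) + 1 < k) (g : Fin (k + 1) → G),
      ψL ⟨PresentedGroup.of m, Subgroup.subset_closure ⟨m, hm, rfl⟩⟩ g = braidMove (m : ℕ) g)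
    {l : BraidGroup r} (hl : l ∈ Subgroup.closure (LkGens r k)) :
    ∀ (h : G) (t : Fin (k + 1) → G),
      ψL ⟨l, hl⟩ (diagConj h t) = diagConj h (ψL ⟨l, hl⟩ t) := by
  refine Subgroup.closure_induction (p := fun l hl => ∀ (h : G) (t : Fin (k + 1) → G),
      ψL ⟨l, hl⟩ (diagConj h t) = diagConj h (ψL ⟨l, hl⟩ t)) ?_ ?_ ?_ ?_ hl
  · rintro b ⟨m, hm, rfl⟩ h t
    exact (hψL m hm _).trans ((braidMove_diagConj _ _ _).trans
      (congrArg (diagConj h) (hψL m hm t).symm))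
  · intro h t
    show ψL 1 (diagConj h t) = diagConj h (ψL 1 t)
    simp
  · intro a b ha hb iha ihb h t
    show ψL (⟨a, ha⟩ * ⟨b, hb⟩) (diagConj h t) = diagConj h (ψL (⟨a, ha⟩ * ⟨b, hb⟩) t)
    rw [map_mul, Equiv.Perm.mul_apply, Equiv.Perm.mul_apply, ihb, iha]
  · intro a ha ih h t
    show ψL (⟨a, ha⟩⁻¹) (diagConj h t) = diagConj h (ψL (⟨a, ha⟩⁻¹) t)
    rw [map_inv]
    have h1 := ih h ((ψL ⟨a, ha⟩)⁻¹ t)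
    rw [Equiv.Perm.apply_inv_self] at h1
    rw [← h1, Equiv.Perm.inv_apply_self]

lemma psiR_diagConj {k : ℕ}
    (ψR : ↥(Subgroup.closure (RkGens r k)) →* Equiv.Perm (Fin (r - k + 1) → G))
    (hψR : ∀ (m : Fin (r - 1)) (hm : k ≤ (m : ℕ)) (g : Fin (r - k + 1) → G),
      ψR ⟨PresentedGroup.of m, Subgroup.subset_closure ⟨m, hm, rfl⟩⟩ g =
        braidMove ((m : ℕ) - k + 1) g)
    {ρ : BraidGroup r} (hρ : ρ ∈ Subgroup.closure (RkGens r k)) :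
    ∀ (h : G) (t : Fin (r - k + 1) → G),
      ψR ⟨ρ, hρ⟩ (diagConj h t) = diagConj h (ψR ⟨ρ, hρ⟩ t) := by
  refine Subgroup.closure_induction (p := fun ρ hρ => ∀ (h : G) (t : Fin (r - k + 1) → G),
      ψR ⟨ρ, hρ⟩ (diagConj h t) = diagConj h (ψR ⟨ρ, hρ⟩ t)) ?_ ?_ ?_ ?_ hρ
  · rintro b ⟨m, hm, rfl⟩ h t
    exact (hψR m hm _).trans ((braidMove_diagConj _ _ _).trans
      (congrArg (diagConj h) (hψR m hm t).symm))
  · intro h t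
    show ψR 1 (diagConj h t) = diagConj h (ψR 1 t)
    simp
  · intro a b ha hb iha ihb h t
    show ψR (⟨a, ha⟩ * ⟨b, hb⟩) (diagConj h t) = diagConj h (ψR (⟨a, ha⟩ * ⟨b, hb⟩) t)
    rw [map_mul, Equiv.Perm.mul_apply, Equiv.Perm.mul_apply, ihb, iha]
  · intro a ha ih h t
    show ψR (⟨a, ha⟩⁻¹) (diagConj h t) = diagConj h (ψR (⟨a, ha⟩⁻¹) t)
    rw [map_inv]
    have h1 := ih h ((ψR ⟨a, ha⟩)⁻¹ t)
    rw [Equiv.Perm.apply_inv_self] at h1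
    rw [← h1, Equiv.Perm.inv_apply_self]

lemma psiL_prod {k : ℕ}
    (ψL : ↥(Subgroup.closure (LkGens r k)) →* Equiv.Perm (Fin (k + 1) → G))
    (hψL : ∀ (m : Fin (r - 1)) (hm : (m : ℕ) + 1 < k) (g : Fin (k + 1) → G),
      ψL ⟨PresentedGroup.of m, Subgroup.subset_closure ⟨m, hm, rfl⟩⟩ g = braidMove (m : ℕ) g)
    {l : BraidGroup r} (hl : l ∈ Subgroup.closure (LkGens r k)) :
    ∀ t : Fin (k + 1) → G,
      (List.ofFn (ψL ⟨l, hl⟩ t)).prod = (List.ofFn t).prod := by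
  refine Subgroup.closure_induction (p := fun l hl => ∀ t : Fin (k + 1) → G,
      (List.ofFn (ψL ⟨l, hl⟩ t)).prod = (List.ofFn t).prod) ?_ ?_ ?_ ?_ hl
  · rintro b ⟨m, hm, rfl⟩ t
    exact (congrArg (fun u => (List.ofFn u).prod) (hψL m hm t)).trans
      (prod_ofFn_braidMove _ t)
  · intro t
    show (List.ofFn (ψL 1 t)).prod = (List.ofFn t).prod
    simp
  · intro a b ha hb iha ihb t
    show (List.ofFn (ψL (⟨a, ha⟩ * ⟨b, hb⟩) t)).prod = (List.ofFn t).prod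
    rw [map_mul, Equiv.Perm.mul_apply, iha, ihb]
  · intro a ha ih t
    have h1 := ih ((ψL ⟨a, ha⟩)⁻¹ t)
    rw [Equiv.Perm.apply_inv_self] at h1
    show (List.ofFn (ψL (⟨a, ha⟩⁻¹) t)).prod = (List.ofFn t).prod
    rw [map_inv]
    exact h1.symm

lemma psiR_prod {k : ℕ}
    (ψR : ↥(Subgroup.closure (RkGens r k)) →* Equiv.Perm (Fin (r - k + 1) → G))
    (hψR : ∀ (m : Fin (r - 1)) (hm : k ≤ (m : ℕ)) (g : Fin (r - k + 1) → G),
      ψR ⟨PresentedGroup.of m, Subgroup.subset_closure ⟨m, hm, rfl⟩⟩ g =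
        braidMove ((m : ℕ) - k + 1) g)
    {ρ : BraidGroup r} (hρ : ρ ∈ Subgroup.closure (RkGens r k)) :
    ∀ t : Fin (r - k + 1) → G,
      (List.ofFn (ψR ⟨ρ, hρ⟩ t)).prod = (List.ofFn t).prod := by
  refine Subgroup.closure_induction (p := fun ρ hρ => ∀ t : Fin (r - k + 1) → G,
      (List.ofFn (ψR ⟨ρ, hρ⟩ t)).prod = (List.ofFn t).prod) ?_ ?_ ?_ ?_ hρ
  · rintro b ⟨m, hm, rfl⟩ t
    exact (congrArg (fun u => (List.ofFn u).prod) (hψR m hm t)).trans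
      (prod_ofFn_braidMove _ t)
  · intro t
    show (List.ofFn (ψR 1 t)).prod = (List.ofFn t).prod
    simp
  · intro a b ha hb iha ihb t
    show (List.ofFn (ψR (⟨a, ha⟩ * ⟨b, hb⟩) t)).prod = (List.ofFn t).prod
    rw [map_mul, Equiv.Perm.mul_apply, iha, ihb]
  · intro a ha ih t
    have h1 := ih ((ψR ⟨a, ha⟩)⁻¹ t)
    rw [Equiv.Perm.apply_inv_self] at h1
    show (List.ofFn (ψR (⟨a, ha⟩⁻¹) t)).prod = (List.ofFn t).prod
    rw [map_inv]
    exact h1.symm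

lemma psiL_apply_last {k : ℕ}
    (ψL : ↥(Subgroup.closure (LkGens r k)) →* Equiv.Perm (Fin (k + 1) → G))
    (hψL : ∀ (m : Fin (r - 1)) (hm : (m : ℕ) + 1 < k) (g : Fin (k + 1) → G),
      ψL ⟨PresentedGroup.of m, Subgroup.subset_closure ⟨m, hm, rfl⟩⟩ g = braidMove (m : ℕ) g)
    {l : BraidGroup r} (hl : l ∈ Subgroup.closure (LkGens r k)) :
    ∀ t : Fin (k + 1) → G,
      ψL ⟨l, hl⟩ t ⟨k, Nat.lt_succ_self k⟩ = t ⟨k, Nat.lt_succ_self k⟩ := by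
  refine Subgroup.closure_induction (p := fun l hl => ∀ t : Fin (k + 1) → G,
      ψL ⟨l, hl⟩ t ⟨k, Nat.lt_succ_self k⟩ = t ⟨k, Nat.lt_succ_self k⟩) ?_ ?_ ?_ ?_ hl
  · rintro b ⟨m, hm, rfl⟩ t
    exact (congrFun (hψL m hm t) _).trans
      (braidMove_apply_of_ne _ _ _ (show k ≠ (m:ℕ) by omega) (show k ≠ (m:ℕ) + 1 by omega))
  · intro t
    show ψL 1 t _ = _
    simp
  · intro a b ha hb iha ihb t
    show ψL (⟨a, ha⟩ * ⟨b, hb⟩) t _ = _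
    rw [map_mul, Equiv.Perm.mul_apply, iha, ihb]
  · intro a ha ih t
    have h1 := ih ((ψL ⟨a, ha⟩)⁻¹ t)
    rw [Equiv.Perm.apply_inv_self] at h1
    show ψL (⟨a, ha⟩⁻¹) t _ = _
    rw [map_inv]
    exact h1.symm

lemma psiR_apply_zero {k : ℕ} (hk1 : 0 < k)
    (ψR : ↥(Subgroup.closure (RkGens r k)) →* Equiv.Perm (Fin (r - k + 1) → G))
    (hψR : ∀ (m : Fin (r - 1)) (hm : k ≤ (m : ℕ)) (g : Fin (r - k + 1) → G),
      ψR ⟨PresentedGroup.of m, Subgroup.subset_closure ⟨m, hm, rfl⟩⟩ g =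
        braidMove ((m : ℕ) - k + 1) g)
    {ρ : BraidGroup r} (hρ : ρ ∈ Subgroup.closure (RkGens r k)) :
    ∀ t : Fin (r - k + 1) → G,
      ψR ⟨ρ, hρ⟩ t ⟨0, Nat.succ_pos _⟩ = t ⟨0, Nat.succ_pos _⟩ := by
  refine Subgroup.closure_induction (p := fun ρ hρ => ∀ t : Fin (r - k + 1) → G,
      ψR ⟨ρ, hρ⟩ t ⟨0, Nat.succ_pos _⟩ = t ⟨0, Nat.succ_pos _⟩) ?_ ?_ ?_ ?_ hρ
  · rintro b ⟨m, hm, rfl⟩ t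
    exact (congrFun (hψR m hm t) _).trans
      (braidMove_apply_of_ne _ _ _ (show (0:ℕ) ≠ (m:ℕ) - k + 1 by omega)
        (show (0:ℕ) ≠ (m:ℕ) - k + 1 + 1 by omega))
  · intro t
    show ψR 1 t _ = _
    simp
  · intro a b ha hb iha ihb t
    show ψR (⟨a, ha⟩ * ⟨b, hb⟩) t _ = _
    rw [map_mul, Equiv.Perm.mul_apply, iha, ihb]
  · intro a ha ih t
    have h1 := ih ((ψR ⟨a, ha⟩)⁻¹ t)
    rw [Equiv.Perm.apply_inv_self] at h1
    show ψR (⟨a, ha⟩⁻¹) t _ = _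
    rw [map_inv]
    exact h1.symm

lemma phiR_restrict_prod (φ : BraidGroup r →* Equiv.Perm (Fin r → G))
    (hφ : ∀ (m : Fin (r - 1)) (g : Fin r → G), φ (PresentedGroup.of m) g = braidMove (m : ℕ) g)
    (k : ℕ) {ρ : BraidGroup r} (hρ : ρ ∈ Subgroup.closure (RkGens r k)) :
    ∀ g : Fin r → G,
      (List.ofFn fun j : Fin (r - k) => φ ρ g ⟨k + j, by have := j.isLt; omega⟩).prod
        = (List.ofFn fun j : Fin (r - k) => g ⟨k + j, by have := j.isLt; omega⟩).prod := by
  refine Subgroup.closure_induction (p := fun ρ hρ => ∀ g : Fin r → G,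
      (List.ofFn fun j : Fin (r - k) => φ ρ g ⟨k + j, by have := j.isLt; omega⟩).prod
        = (List.ofFn fun j : Fin (r - k) => g ⟨k + j, by have := j.isLt; omega⟩).prod)
    ?_ ?_ ?_ ?_ hρ
  · rintro b ⟨m, hm, rfl⟩ g
    have e1 : (fun j : Fin (r - k) => φ (PresentedGroup.of m) g ⟨k + j, by have := j.isLt; omega⟩)
        = braidMove ((m : ℕ) - k) (fun j : Fin (r - k) => g ⟨k + j, by have := j.isLt; omega⟩) := by
      rw [hφ]
      exact braidMove_restrict (m : ℕ) hm g
    rw [e1]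
    exact prod_ofFn_braidMove _ _
  · intro g
    simp
  · intro a b ha hb iha ihb g
    have e2 : φ (a * b) g = φ a (φ b g) := by rw [map_mul, Equiv.Perm.mul_apply]
    refine Eq.trans ?_ (ihb g)
    refine Eq.trans (congrArg List.prod (congrArg List.ofFn (funext fun j => ?_))) (iha (φ b g))
    rw [e2]
  · intro a ha ih g
    have h1 := ih (φ a⁻¹ g)
    have h2 : φ a (φ a⁻¹ g) = g := by
      rw [← Equiv.Perm.mul_apply, ← map_mul, mul_inv_cancel, map_one, Equiv.Perm.one_apply]
    rw [h2] at h1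
    exact h1.symm

end ShadowHelpers5
section ShadowHelpers6

variable {G : Type*} [Group G] {r : ℕ}

set_option maxHeartbeats 1000000 in
lemma psiL_entry (π : BraidGroup r →* Equiv.Perm (Fin r))
    (hπ : ∀ m : Fin (r - 1),
      π (PresentedGroup.of m) =
        Equiv.swap ⟨(m : ℕ), by have := m.isLt; omega⟩
          ⟨(m : ℕ) + 1, by have := m.isLt; omega⟩)
    {k : ℕ} (hk2 : k < r)
    (ψL : ↥(Subgroup.closure (LkGens r k)) →* Equiv.Perm (Fin (k + 1) → G))
    (hψL : ∀ (m : Fin (r - 1)) (hm : (m : ℕ) + 1 < k) (g : Fin (k + 1) → G),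
      ψL ⟨PresentedGroup.of m, Subgroup.subset_closure ⟨m, hm, rfl⟩⟩ g = braidMove (m : ℕ) g)
    {l : BraidGroup r} (hl : l ∈ Subgroup.closure (LkGens r k)) :
    ∀ (t : Fin (k + 1) → G) (p : ℕ) (hp : p < k),
      ∃ (c : G) (q : ℕ) (hq : q < k), π l ⟨q, by omega⟩ = ⟨p, by omega⟩ ∧
        ψL ⟨l, hl⟩ t ⟨p, by omega⟩ = c⁻¹ * t ⟨q, by omega⟩ * c := by
  refine Subgroup.closure_induction (p := fun l hl => ∀ (t : Fin (k + 1) → G) (p : ℕ)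
      (hp : p < k), ∃ (c : G) (q : ℕ) (hq : q < k), π l ⟨q, by omega⟩ = ⟨p, by omega⟩ ∧
        ψL ⟨l, hl⟩ t ⟨p, by omega⟩ = c⁻¹ * t ⟨q, by omega⟩ * c) ?_ ?_ ?_ ?_ hl
  · rintro b ⟨m, hm, rfl⟩ t p hp
    by_cases h1 : p = (m : ℕ)
    · subst h1
      refine ⟨1, (m : ℕ) + 1, by omega, ?_, ?_⟩
      · rw [hπ]
        exact Equiv.swap_apply_right _ _
      · rw [inv_one, one_mul, mul_one]
        refine (congrFun (hψL m hm t) _).trans ?_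
        simp [braidMove, show (m : ℕ) + 1 < k + 1 by omega]
    · by_cases h2 : p = (m : ℕ) + 1
      · subst h2
        refine ⟨t ⟨(m : ℕ) + 1, by omega⟩, (m : ℕ), by omega, ?_, ?_⟩
        · rw [hπ]
          exact Equiv.swap_apply_left _ _
        · refine (congrFun (hψL m hm t) _).trans ?_
          simp [braidMove, show ¬ ((m : ℕ) + 1 = (m : ℕ)) by omega]
      · refine ⟨1, p, hp, ?_, ?_⟩
        · rw [hπ]
          exact Equiv.swap_apply_of_ne_of_ne
            (Fin.ne_of_val_ne (show p ≠ (m : ℕ) by omega))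
            (Fin.ne_of_val_ne (show p ≠ (m : ℕ) + 1 by omega))
        · rw [inv_one, one_mul, mul_one]
          exact (congrFun (hψL m hm t) _).trans
            (braidMove_apply_of_ne _ _ _ (show p ≠ (m : ℕ) by omega)
              (show p ≠ (m : ℕ) + 1 by omega))
  · intro t p hp
    refine ⟨1, p, hp, ?_, ?_⟩
    · rw [map_one]; rfl
    · rw [inv_one, one_mul, mul_one]
      show ψL 1 t _ = _
      rw [map_one]; rfl
  · intro a b ha hb iha ihb t p hp
    obtain ⟨c, qa, hqa, hπa, hva⟩ := iha (ψL ⟨b, hb⟩ t) p hp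
    obtain ⟨d, qb, hqb, hπb, hvb⟩ := ihb t qa hqa
    refine ⟨d * c, qb, hqb, ?_, ?_⟩
    · rw [map_mul, Equiv.Perm.mul_apply, hπb, hπa]
    · show ψL (⟨a, ha⟩ * ⟨b, hb⟩) t _ = _
      rw [map_mul, Equiv.Perm.mul_apply, hva, hvb, mul_inv_rev]
      simp [mul_assoc]
  · intro a ha ih t p hp
    have hpr : p < r := by omega
    have hPlt : ((π a ⟨p, hpr⟩ : Fin r) : ℕ) < k :=
      pi_lt_of_LkGens π hπ k ha _ hp
    obtain ⟨c, q, hq, hπq, hv⟩ := ih (ψL ⟨a⁻¹, inv_mem ha⟩ t) ((π a ⟨p, hpr⟩ : Fin r) : ℕ) hPlt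
    have hePn : (⟨((π a ⟨p, hpr⟩ : Fin r) : ℕ), by omega⟩ : Fin r) = π a ⟨p, hpr⟩ :=
      Fin.eta _ _
    have hqp : q = p := by
      have h3 : π a ⟨q, by omega⟩ = π a ⟨p, hpr⟩ := hπq.trans hePn
      exact congrArg Fin.val ((π a).injective h3)
    subst hqp
    have hval : ψL ⟨a, ha⟩ (ψL ⟨a⁻¹, inv_mem ha⟩ t) = t := by
      show ψL ⟨a, ha⟩ (ψL (⟨a, ha⟩⁻¹) t) = t
      rw [show ψL (⟨a, ha⟩⁻¹) = (ψL ⟨a, ha⟩)⁻¹ from map_inv _ _, Equiv.Perm.apply_inv_self]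
    rw [hval] at hv
    refine ⟨c⁻¹, ((π a ⟨q, hpr⟩ : Fin r) : ℕ), hPlt, ?_, ?_⟩
    · rw [map_inv, hePn]
      exact Equiv.Perm.inv_apply_self _ _
    · rw [inv_inv, hv]
      group

set_option maxHeartbeats 1000000 in
lemma psiR_entry (π : BraidGroup r →* Equiv.Perm (Fin r))
    (hπ : ∀ m : Fin (r - 1),
      π (PresentedGroup.of m) =
        Equiv.swap ⟨(m : ℕ), by have := m.isLt; omega⟩
          ⟨(m : ℕ) + 1, by have := m.isLt; omega⟩)
    {k : ℕ} (hk2 : k < r)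
    (ψR : ↥(Subgroup.closure (RkGens r k)) →* Equiv.Perm (Fin (r - k + 1) → G))
    (hψR : ∀ (m : Fin (r - 1)) (hm : k ≤ (m : ℕ)) (g : Fin (r - k + 1) → G),
      ψR ⟨PresentedGroup.of m, Subgroup.subset_closure ⟨m, hm, rfl⟩⟩ g =
        braidMove ((m : ℕ) - k + 1) g)
    {ρ : BraidGroup r} (hρ : ρ ∈ Subgroup.closure (RkGens r k)) :
    ∀ (t : Fin (r - k + 1) → G) (p : ℕ) (hp0 : 0 < p) (hp : p < r - k + 1),
      ∃ (c : G) (q : ℕ) (hq0 : 0 < q) (hq : q < r - k + 1),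
        π ρ ⟨k + q - 1, by omega⟩ = ⟨k + p - 1, by omega⟩ ∧
        ψR ⟨ρ, hρ⟩ t ⟨p, hp⟩ = c⁻¹ * t ⟨q, hq⟩ * c := by
  refine Subgroup.closure_induction (p := fun ρ hρ => ∀ (t : Fin (r - k + 1) → G) (p : ℕ)
      (hp0 : 0 < p) (hp : p < r - k + 1),
      ∃ (c : G) (q : ℕ) (hq0 : 0 < q) (hq : q < r - k + 1),
        π ρ ⟨k + q - 1, by omega⟩ = ⟨k + p - 1, by omega⟩ ∧
        ψR ⟨ρ, hρ⟩ t ⟨p, hp⟩ = c⁻¹ * t ⟨q, hq⟩ * c) ?_ ?_ ?_ ?_ hρ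
  · rintro b ⟨m, hm, rfl⟩ t p hp0 hp
    have hmr := m.isLt
    by_cases h1 : p = (m : ℕ) - k + 1
    · subst h1
      refine ⟨1, (m : ℕ) - k + 2, by omega, by omega, ?_, ?_⟩
      · rw [hπ]
        have e1 : (⟨k + ((m : ℕ) - k + 2) - 1, by omega⟩ : Fin r) = ⟨(m : ℕ) + 1, by omega⟩ :=
          Fin.ext (show k + ((m : ℕ) - k + 2) - 1 = (m : ℕ) + 1 by omega)
        have e2 : (⟨k + ((m : ℕ) - k + 1) - 1, by omega⟩ : Fin r) = ⟨(m : ℕ), by omega⟩ :=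
          Fin.ext (show k + ((m : ℕ) - k + 1) - 1 = (m : ℕ) by omega)
        rw [e1, e2]
        exact Equiv.swap_apply_right _ _
      · rw [inv_one, one_mul, mul_one]
        refine (congrFun (hψR m hm t) _).trans ?_
        simp [braidMove, show (m : ℕ) - k + 1 + 1 < r - k + 1 by omega]
    · by_cases h2 : p = (m : ℕ) - k + 2
      · subst h2
        refine ⟨t ⟨(m : ℕ) - k + 2, by omega⟩, (m : ℕ) - k + 1, by omega, by omega, ?_, ?_⟩
        · rw [hπ]
          have e1 : (⟨k + ((m : ℕ) - k + 1) - 1, by omega⟩ : Fin r) = ⟨(m : ℕ), by omega⟩ :=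
            Fin.ext (show k + ((m : ℕ) - k + 1) - 1 = (m : ℕ) by omega)
          have e2 : (⟨k + ((m : ℕ) - k + 2) - 1, by omega⟩ : Fin r) = ⟨(m : ℕ) + 1, by omega⟩ :=
            Fin.ext (show k + ((m : ℕ) - k + 2) - 1 = (m : ℕ) + 1 by omega)
          rw [e1, e2]
          exact Equiv.swap_apply_left _ _
        · refine (congrFun (hψR m hm t) _).trans ?_
          simp [braidMove, show ¬ ((m : ℕ) - k + 2 = (m : ℕ) - k + 1) by omega,
            show (m : ℕ) - k + 1 + 1 = (m : ℕ) - k + 2 by omega]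
      · refine ⟨1, p, hp0, hp, ?_, ?_⟩
        · rw [hπ]
          exact Equiv.swap_apply_of_ne_of_ne
            (Fin.ne_of_val_ne (show k + p - 1 ≠ (m : ℕ) by omega))
            (Fin.ne_of_val_ne (show k + p - 1 ≠ (m : ℕ) + 1 by omega))
        · rw [inv_one, one_mul, mul_one]
          exact (congrFun (hψR m hm t) _).trans
            (braidMove_apply_of_ne _ _ _ (show p ≠ (m : ℕ) - k + 1 by omega)
              (show p ≠ (m : ℕ) - k + 1 + 1 by omega))
  · intro t p hp0 hp
    refine ⟨1, p, hp0, hp, ?_, ?_⟩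
    · rw [map_one]; rfl
    · rw [inv_one, one_mul, mul_one]
      show ψR 1 t _ = _
      rw [map_one]; rfl
  · intro a b ha hb iha ihb t p hp0 hp
    obtain ⟨c, qa, hqa0, hqa, hπa, hva⟩ := iha (ψR ⟨b, hb⟩ t) p hp0 hp
    obtain ⟨d, qb, hqb0, hqb, hπb, hvb⟩ := ihb t qa hqa0 hqa
    refine ⟨d * c, qb, hqb0, hqb, ?_, ?_⟩
    · rw [map_mul, Equiv.Perm.mul_apply, hπb, hπa]
    · show ψR (⟨a, ha⟩ * ⟨b, hb⟩) t _ = _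
      rw [map_mul, Equiv.Perm.mul_apply, hva, hvb, mul_inv_rev]
      simp [mul_assoc]
  · intro a ha ih t p hp0 hp
    have hpr : k + p - 1 < r := by omega
    have hPge : k ≤ ((π a ⟨k + p - 1, hpr⟩ : Fin r) : ℕ) :=
      pi_ge_of_RkGens π hπ k ha _ (show k ≤ k + p - 1 by omega)
    have hPr := (π a ⟨k + p - 1, hpr⟩ : Fin r).isLt
    have hpP0 : 0 < ((π a ⟨k + p - 1, hpr⟩ : Fin r) : ℕ) - k + 1 := by omega
    have hpP : ((π a ⟨k + p - 1, hpr⟩ : Fin r) : ℕ) - k + 1 < r - k + 1 := by omega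
    obtain ⟨c, q, hq0, hq, hπq, hv⟩ := ih (ψR ⟨a⁻¹, inv_mem ha⟩ t)
      (((π a ⟨k + p - 1, hpr⟩ : Fin r) : ℕ) - k + 1) hpP0 hpP
    have hePn : (⟨k + (((π a ⟨k + p - 1, hpr⟩ : Fin r) : ℕ) - k + 1) - 1, by omega⟩ : Fin r)
        = π a ⟨k + p - 1, hpr⟩ :=
      Fin.ext (show k + (((π a ⟨k + p - 1, hpr⟩ : Fin r) : ℕ) - k + 1) - 1
        = ((π a ⟨k + p - 1, hpr⟩ : Fin r) : ℕ) by omega)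
    have hqp : q = p := by
      have h3 : π a ⟨k + q - 1, by omega⟩ = π a ⟨k + p - 1, hpr⟩ := hπq.trans hePn
      have h4 := congrArg Fin.val ((π a).injective h3)
      simp only [] at h4
      omega
    subst hqp
    have hval : ψR ⟨a, ha⟩ (ψR ⟨a⁻¹, inv_mem ha⟩ t) = t := by
      show ψR ⟨a, ha⟩ (ψR (⟨a, ha⟩⁻¹) t) = t
      rw [show ψR (⟨a, ha⟩⁻¹) = (ψR ⟨a, ha⟩)⁻¹ from map_inv _ _, Equiv.Perm.apply_inv_self]
    rw [hval] at hv
    refine ⟨c⁻¹, ((π a ⟨k + q - 1, hpr⟩ : Fin r) : ℕ) - k + 1, hpP0, hpP, ?_, ?_⟩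
    · rw [map_inv, hePn]
      exact Equiv.Perm.inv_apply_self _ _
    · rw [inv_inv, hv]
      group

end ShadowHelpers6
/-- Level-`k` setup as before.  Let `C` be a conjugacy class of `G`, `x₀ ∈ C`,
`y₀ := x₀⁻¹`, let `H` be a head contained in `L_{k,C}` with shadow `H₀` and `T` a tail
contained in `R_{k,C⁻¹}` with shadow `T₀`.  Then the set `S` of `r`-tuples `g` with
`(g_1, …, g_k, x₀) ∈ H₀` and `(y₀, g_{k+1}, …, g_r) ∈ T₀` is a disjoint union of shadows of
prenodes: it is invariant under `L_k × R_k × C_G(x₀)`, and every element of `S` lies in the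
shadow of a prenode whose entire shadow is contained in `S`. -/
theorem headShadow_times_tailShadow_union_of_prenode_shadows
    {G : Type*} [Group G] [Fintype G] {r : ℕ} (hr : 2 ≤ r)
    (C' : Fin r → Set G)
    (hC' : ∀ m : Fin r, ∃ x : G, C' m = {y | IsConj x y})
    (hord : ∀ i j k : Fin r, i ≤ k → k ≤ j → C' i = C' j → C' k = C' i)
    (π : BraidGroup r →* Equiv.Perm (Fin r))
    (hπ : ∀ m : Fin (r - 1),
      π (PresentedGroup.of m) =
        Equiv.swap ⟨(m : ℕ), by have := m.isLt; omega⟩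
          ⟨(m : ℕ) + 1, by have := m.isLt; omega⟩)
    (φ : BraidGroup r →* Equiv.Perm (Fin r → G))
    (hφ : ∀ (m : Fin (r - 1)) (g : Fin r → G),
      φ (PresentedGroup.of m) g = braidMove (m : ℕ) g)
    (k : ℕ) (hk1 : 1 < k) (hk2 : k < r)
    (ψL : ↥(Subgroup.closure (LkGens r k)) →* Equiv.Perm (Fin (k + 1) → G))
    (hψL : ∀ (m : Fin (r - 1)) (hm : (m : ℕ) + 1 < k) (g : Fin (k + 1) → G),
      ψL ⟨PresentedGroup.of m, Subgroup.subset_closure ⟨m, hm, rfl⟩⟩ g = braidMove (m : ℕ) g)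
    (ψR : ↥(Subgroup.closure (RkGens r k)) →* Equiv.Perm (Fin (r - k + 1) → G))
    (hψR : ∀ (m : Fin (r - 1)) (hm : k ≤ (m : ℕ)) (g : Fin (r - k + 1) → G),
      ψR ⟨PresentedGroup.of m, Subgroup.subset_closure ⟨m, hm, rfl⟩⟩ g =
        braidMove ((m : ℕ) - k + 1) g)
    (x₀ : G) (C : Set G) (hx₀ : x₀ ∈ C) (hCclass : C = {y | IsConj x₀ y})
    (H : Set (Fin (k + 1) → G)) (hH : IsHead C' π hk2.le C ψL H)
    (T : Set (Fin (r - k + 1) → G)) (hT : IsTail C' π hk2.le {y | y⁻¹ ∈ C} ψR T)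
    (S : Set (Fin r → G))
    (hS : S = {g | headWith hk2.le g x₀ ∈ {t ∈ H | t ⟨k, Nat.lt_succ_self k⟩ = x₀} ∧
      tailWith hk2.le g x₀⁻¹ ∈ {t ∈ T | t ⟨0, by omega⟩ = x₀⁻¹}}) :
    (∀ g ∈ S, ∀ l ρ : BraidGroup r, inLk C' π k l → inRk C' π k ρ →
      ∀ c ∈ Subgroup.centralizer {x₀}, diagConj c (φ (l * ρ) g) ∈ S) ∧
    (∀ g ∈ S, ∃ N : Set (Fin r → G), IsPrenode C' π φ k N ∧
      g ∈ {g' ∈ N | ((List.ofFn g').drop k).prod = x₀} ∧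
      {g' ∈ N | ((List.ofFn g').drop k).prod = x₀} ⊆ S) := by
  obtain ⟨t₀, ht₀, hHdef⟩ := hH
  obtain ⟨s₀, hs₀, hTdef⟩ := hT
  have hkr : k ≤ r := hk2.le
  -- conjugation-closedness of the classes
  have hC'conj : ∀ (m : Fin r) (a d : G), a ∈ C' m → d⁻¹ * a * d ∈ C' m := by
    intro m a d ha
    obtain ⟨x, hx⟩ := hC' m
    rw [hx] at ha ⊢
    exact IsConj.trans ha (by rw [isConj_iff]; exact ⟨d⁻¹, by group⟩)
  have hBPmul : ∀ a b : BraidGroup r, inBP C' π a → inBP C' π b → inBP C' π (a * b) := by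
    intro a b hA hB m
    rw [map_mul, Equiv.Perm.mul_apply, hA (π b m)]
    exact hB m
  have hhead_last : ∀ g : Fin r → G,
      headWith hk2.le g x₀ ⟨k, Nat.lt_succ_self k⟩ = x₀ := by
    intro g; simp [headWith]
  have htail_zero : ∀ g : Fin r → G,
      tailWith hk2.le g x₀⁻¹ ⟨0, by omega⟩ = x₀⁻¹ := by
    intro g; simp [tailWith]
  -- Part 1 : invariance
  have main1 : ∀ g ∈ S, ∀ l ρ : BraidGroup r, inLk C' π k l → inRk C' π k ρ →
      ∀ c ∈ Subgroup.centralizer {x₀}, diagConj c (φ (l * ρ) g) ∈ S := by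
    intro g hg l ρ hl hρ c hc
    rw [hS] at hg ⊢
    obtain ⟨⟨hgH, -⟩, ⟨hgT, -⟩⟩ := hg
    obtain ⟨hl1, hl2⟩ := hl
    obtain ⟨hρ1, hρ2⟩ := hρ
    have hcomm := Subgroup.mem_centralizer_iff.mp hc x₀ (Set.mem_singleton _)
    have hcx : c⁻¹ * x₀ * c = x₀ := by
      calc c⁻¹ * x₀ * c = c⁻¹ * (x₀ * c) := by rw [mul_assoc]
      _ = c⁻¹ * (c * x₀) := by rw [hcomm]
      _ = x₀ := by group
    have hcxinv : c⁻¹ * x₀⁻¹ * c = x₀⁻¹ := by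
      have h9 : (c⁻¹ * x₀ * c)⁻¹ = x₀⁻¹ := by rw [hcx]
      calc c⁻¹ * x₀⁻¹ * c = (c⁻¹ * x₀ * c)⁻¹ := by group
      _ = x₀⁻¹ := h9
    have e1 : headWith hk2.le (diagConj c (φ (l * ρ) g)) x₀
        = diagConj c (ψL ⟨l, hl1⟩ (headWith hk2.le g x₀)) := by
      rw [headWith_diagConj hk2.le c x₀ hcx]
      refine congrArg (diagConj c) ?_
      rw [show φ (l * ρ) g = φ l (φ ρ g) from by rw [map_mul, Equiv.Perm.mul_apply],
        head_compat φ hφ hk2 ψL hψL hl1]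
      exact congrArg _ (headWith_congr hk2.le x₀
        (fun j hj => phi_fix_lt_of_RkGens φ hφ k hρ1 g j hj))
    have e2 : tailWith hk2.le (diagConj c (φ (l * ρ) g)) x₀⁻¹
        = diagConj c (ψR ⟨ρ, hρ1⟩ (tailWith hk2.le g x₀⁻¹)) := by
      rw [tailWith_diagConj hk2.le c x₀⁻¹ hcxinv]
      refine congrArg (diagConj c) ?_
      rw [show φ (l * ρ) g = φ l (φ ρ g) from by rw [map_mul, Equiv.Perm.mul_apply],
        tailWith_congr hk2.le x₀⁻¹
          (fun j hj => phi_fix_ge_of_LkGens φ hφ k hl1 (φ ρ g) j hj)]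
      exact tail_compat φ hφ hk2 ψR hψR hρ1 g x₀⁻¹
    refine ⟨⟨?_, hhead_last _⟩, ⟨?_, htail_zero _⟩⟩
    · rw [e1]
      rw [hHdef] at hgH ⊢
      obtain ⟨l', hl', hBP', h, hEq⟩ := hgH
      refine ⟨l * l', mul_mem hl1 hl', hBPmul l l' hl2 hBP', h * c, ?_⟩
      rw [hEq, psiL_diagConj ψL hψL hl1, diagConj_diagConj]
      refine congrArg (diagConj (h * c)) ?_
      show ψL ⟨l, hl1⟩ (ψL ⟨l', hl'⟩ t₀) = ψL (⟨l, hl1⟩ * ⟨l', hl'⟩) t₀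
      rw [map_mul, Equiv.Perm.mul_apply]
    · rw [e2]
      rw [hTdef] at hgT ⊢
      obtain ⟨ρ', hρ', hBQ', h, hEq⟩ := hgT
      refine ⟨ρ * ρ', mul_mem hρ1 hρ', hBPmul ρ ρ' hρ2 hBQ', h * c, ?_⟩
      rw [hEq, psiR_diagConj ψR hψR hρ1, diagConj_diagConj]
      refine congrArg (diagConj (h * c)) ?_
      show ψR ⟨ρ, hρ1⟩ (ψR ⟨ρ', hρ'⟩ s₀) = ψR (⟨ρ, hρ1⟩ * ⟨ρ', hρ'⟩) s₀
      rw [map_mul, Equiv.Perm.mul_apply]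
  refine ⟨main1, ?_⟩
  -- Part 2
  intro g hg
  have hg' := hg
  rw [hS] at hg'
  obtain ⟨⟨hgH, -⟩, ⟨hgT, -⟩⟩ := hg'
  rw [hHdef] at hgH
  rw [hTdef] at hgT
  obtain ⟨l', hl', hBP', hd, hEqH⟩ := hgH
  obtain ⟨ρ', hρ', hBQ', he, hEqT⟩ := hgT
  -- the entries of g lie in the classes
  have hgC : ∀ m : Fin r, g m ∈ C' m := by
    intro m
    have hmr := m.isLt
    by_cases hmk : (m : ℕ) < k
    · have e : headWith hk2.le g x₀ ⟨(m : ℕ), by omega⟩ = g m := by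
        simp [headWith, hmk]
      obtain ⟨c, q, hq, hπq, hval⟩ := psiL_entry π hπ hk2 ψL hψL hl' t₀ (m : ℕ) hmk
      have e2 : g m = hd⁻¹ * (ψL ⟨l', hl'⟩ t₀ ⟨(m : ℕ), by omega⟩) * hd := by
        rw [← e, hEqH]; rfl
      rw [hval] at e2
      have ht0q : t₀ ⟨q, by omega⟩ ∈ C' ⟨q, by omega⟩ := ht₀.1 ⟨q, by omega⟩ hq
      have hclass : C' ⟨q, by omega⟩ = C' m := by
        have h5 := hBP' ⟨q, by omega⟩
        rw [hπq] at h5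
        calc C' ⟨q, by omega⟩ = C' ⟨(m : ℕ), by omega⟩ := h5.symm
        _ = C' m := congrArg C' (Fin.eta _ _)
      rw [e2, ← hclass]
      exact hC'conj _ _ hd (hC'conj _ _ c ht0q)
    · have hm1 : 0 < (m : ℕ) - k + 1 := by omega
      have hm2 : (m : ℕ) - k + 1 < r - k + 1 := by omega
      have e : tailWith hk2.le g x₀⁻¹ ⟨(m : ℕ) - k + 1, hm2⟩ = g m := by
        simp only [tailWith, dif_pos hm1]
        exact congrArg g (Fin.ext (show k + ((m : ℕ) - k + 1) - 1 = (m : ℕ) by omega))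
      obtain ⟨c, q, hq0, hq, hπq, hval⟩ :=
        psiR_entry π hπ hk2 ψR hψR hρ' s₀ ((m : ℕ) - k + 1) hm1 hm2
      have e2 : g m = he⁻¹ * (ψR ⟨ρ', hρ'⟩ s₀ ⟨(m : ℕ) - k + 1, hm2⟩) * he := by
        rw [← e, hEqT]; rfl
      rw [hval] at e2
      have hs0q : s₀ ⟨q, hq⟩ ∈ C' ⟨k + q - 1, by omega⟩ := hs₀.2.1 ⟨q, hq⟩ hq0
      have hclass : C' ⟨k + q - 1, by omega⟩ = C' m := by
        have h5 := hBQ' ⟨k + q - 1, by omega⟩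
        rw [hπq] at h5
        calc C' ⟨k + q - 1, by omega⟩ = C' ⟨k + ((m : ℕ) - k + 1) - 1, by omega⟩ := h5.symm
        _ = C' m := congrArg C' (Fin.ext (show k + ((m : ℕ) - k + 1) - 1 = (m : ℕ) by omega))
      rw [e2, ← hclass]
      exact hC'conj _ _ he (hC'conj _ _ c hs0q)
  -- products
  have hprod_head : (List.ofFn (headWith hk2.le g x₀)).prod = 1 := by
    rw [hEqH, prod_ofFn_diagConj, psiL_prod ψL hψL hl' t₀, ht₀.2.2]
    simp
  have hprod_tail : (List.ofFn (tailWith hk2.le g x₀⁻¹)).prod = 1 := by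
    rw [hEqT, prod_ofFn_diagConj, psiR_prod ψR hψR hρ' s₀, hs₀.2.2]
    simp
  have hA : (List.ofFn fun j : Fin k => g ⟨j, lt_of_lt_of_le j.isLt hkr⟩).prod = x₀⁻¹ := by
    have h6 : (List.ofFn fun j : Fin k => g ⟨j, lt_of_lt_of_le j.isLt hkr⟩).prod * x₀ = 1 := by
      rw [← prod_ofFn_headWith hk2.le g x₀]; exact hprod_head
    exact eq_inv_of_mul_eq_one_left h6
  have hB : (List.ofFn fun j : Fin (r - k) => g ⟨k + j, by have := j.isLt; omega⟩).prod
      = x₀ := by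
    have h7 : x₀⁻¹ *
        (List.ofFn fun j : Fin (r - k) => g ⟨k + j, by have := j.isLt; omega⟩).prod = 1 := by
      rw [← prod_ofFn_tailWith hk2.le g x₀⁻¹]; exact hprod_tail
    have := inv_mul_eq_one.mp h7
    exact this.symm
  have hgprod : (List.ofFn g).prod = 1 := by
    rw [ofFn_split hkr g, List.prod_append, hA, hB]
    simp
  have hdropg : ((List.ofFn g).drop k).prod = x₀ := by
    rw [drop_ofFn_eq hkr g]; exact hB
  have hinLk1 : inLk C' π k 1 := ⟨one_mem _, fun m => by rw [map_one, Equiv.Perm.one_apply]⟩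
  have hinRk1 : inRk C' π k 1 := ⟨one_mem _, fun m => by rw [map_one, Equiv.Perm.one_apply]⟩
  refine ⟨{τ | ∃ l ρ : BraidGroup r, inLk C' π k l ∧ inRk C' π k ρ ∧
      ∃ h : G, τ = diagConj h (φ (l * ρ) g)}, ⟨g, hgC, hgprod, rfl⟩,
    ⟨⟨1, 1, hinLk1, hinRk1, 1, ?_⟩, hdropg⟩, ?_⟩
  · rw [one_mul, map_one, Equiv.Perm.one_apply, diagConj_one']
  · rintro τ ⟨⟨l, ρ, hl, hρ, h, rfl⟩, hτ⟩
    have hBτ : ((List.ofFn (diagConj h (φ (l * ρ) g))).drop k).prod = h⁻¹ * x₀ * h := by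
      rw [drop_ofFn_eq hkr]
      have e0 : (fun j : Fin (r - k) => diagConj h (φ (l * ρ) g) ⟨k + j, by have := j.isLt; omega⟩)
          = diagConj h (fun j : Fin (r - k) => φ (l * ρ) g ⟨k + j, by have := j.isLt; omega⟩) :=
        rfl
      rw [e0, prod_ofFn_diagConj]
      refine congrArg (fun z => h⁻¹ * z * h) ?_
      have e3 : φ (l * ρ) g = φ l (φ ρ g) := by rw [map_mul, Equiv.Perm.mul_apply]
      have e4 : (fun j : Fin (r - k) => φ l (φ ρ g) ⟨k + j, by have := j.isLt; omega⟩)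
          = (fun j : Fin (r - k) => φ ρ g ⟨k + j, by have := j.isLt; omega⟩) :=
        funext fun j => phi_fix_ge_of_LkGens φ hφ k hl.1 (φ ρ g) _
          (show k ≤ k + (j : ℕ) by omega)
      rw [e3, e4, phiR_restrict_prod φ hφ k hρ.1 g]
      exact hB
    have h8 : h⁻¹ * x₀ * h = x₀ := by rw [← hBτ]; exact hτ
    have hcent : h ∈ Subgroup.centralizer {x₀} := by
      rw [Subgroup.mem_centralizer_iff]
      intro y hy
      rw [Set.mem_singleton_iff] at hy
      subst hy
      calc y * h = h * (h⁻¹ * y * h) := by group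
      _ = h * y := by rw [h8]
    exact main1 g hg l ρ hl hρ h hcent
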